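/- arXiv:1711.03684 — 3 statements merged into one kernel-verified Lean document; each statement's English description precedes it below -/
import Mathlib

section
/- With ξ(τ) = α(τ) + β(τ) as defined via α(τ) = min(1, max(0, 1 − (τ − σ²)/(P·H))) and β(τ) = min(1, max(0, (τ − A·G − σ²)/(P·H))), and assuming 0 < A·G ≤ P·H, the minimum of ξ over all τ ∈ ℝ equals 1 − A·G/(P·H), attained for every τ in the interval [A·G + σ², P·H + σ²]. -/
open Set

/-- when 0 < A·G ≤ P·H, the minimum detection error rate over all
thresholds is 1 − A·G/(P·H), attained on [A·G + σ², P·H + σ²]. -/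
theorem stmt_3 (σ2 P H A G : ℝ) (hσ2 : 0 < σ2) (hP : 0 < P) (hH : 0 < H)
    (hA : 0 < A) (hG : 0 < G) (hle : A * G ≤ P * H)
    (α β ξ : ℝ → ℝ)
    (hα : ∀ τ, α τ = min 1 (max 0 (1 - (τ - σ2) / (P * H))))
    (hβ : ∀ τ, β τ = min 1 (max 0 ((τ - A * G - σ2) / (P * H))))
    (hξ : ∀ τ, ξ τ = α τ + β τ) :
    IsLeast (Set.range ξ) (1 - A * G / (P * H)) ∧
      ∀ τ ∈ Icc (A * G + σ2) (P * H + σ2), ξ τ = 1 - A * G / (P * H) := by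
  have hc : (0:ℝ) < P * H := mul_pos hP hH
  have hAG : (0:ℝ) < A * G := mul_pos hA hG
  have hd0 : 0 < A * G / (P * H) := div_pos hAG hc
  have hd1 : A * G / (P * H) ≤ 1 := (div_le_one hc).mpr hle
  have heq : ∀ τ ∈ Icc (A * G + σ2) (P * H + σ2), ξ τ = 1 - A * G / (P * H) := by
    intro τ hτ
    obtain ⟨h1, h2⟩ := hτ
    rw [hξ, hα, hβ]
    have ha1 : (0:ℝ) ≤ (τ - σ2) / (P * H) := div_nonneg (by linarith) hc.le
    have ha2 : 1 - (τ - σ2) / (P * H) ≤ 1 := by linarith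
    have ha3 : (0:ℝ) ≤ 1 - (τ - σ2) / (P * H) := by
      have : (τ - σ2) / (P * H) ≤ 1 := (div_le_one hc).mpr (by linarith)
      linarith
    have hb1 : (0:ℝ) ≤ (τ - A * G - σ2) / (P * H) := div_nonneg (by linarith) hc.le
    have hb2 : (τ - A * G - σ2) / (P * H) ≤ 1 := (div_le_one hc).mpr (by linarith)
    rw [max_eq_right ha3, min_eq_right ha2, max_eq_right hb1, min_eq_right hb2]
    field_simp
    ring
  refine ⟨⟨⟨A * G + σ2, ?_⟩, ?_⟩, heq⟩
  · exact heq _ ⟨le_refl _, by linarith⟩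
  · rintro x ⟨τ, rfl⟩
    rw [hξ, hα, hβ]
    have hrw : (τ - A * G - σ2) / (P * H) = (τ - σ2) / (P * H) - A * G / (P * H) := by
      ring
    rw [hrw]
    simp only [min_def, max_def]
    split_ifs <;> linarith
end

section
/- The optimal detection error rate ξ* = max(0, 1 − A·G/(P·H)) does not depend on the noise variance σ², and as P → ∞, ξ* → 1. -/
open Filter

/-- the optimal detection error rate ξ* = max(0, 1 − A·G/(P·H)) does not
depend on the noise variance σ², and tends to 1 as P → ∞. -/
theorem stmt_4 (A G H : ℝ) (hA : 0 < A) (hG : 0 < G) (hH : 0 < H)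
    (ξstar : ℝ → ℝ → ℝ)
    (hξ : ∀ σ2 P, ξstar σ2 P = max 0 (1 - A * G / (P * H))) :
    (∀ σ2 σ2' P, ξstar σ2 P = ξstar σ2' P) ∧
      ∀ σ2, Tendsto (fun P => ξstar σ2 P) atTop (nhds 1) := by
  constructor
  · intro σ2 σ2' P; rw [hξ, hξ]
  · intro σ2
    have h1 : Tendsto (fun P : ℝ => 1 - A * G / (P * H)) atTop (nhds 1) := by
      have : Tendsto (fun P : ℝ => A * G / (P * H)) atTop (nhds 0) := by
        have := Tendsto.atTop_mul_const hH tendsto_id (α := ℝ)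
        simpa using this.const_div_atTop (A * G)
      simpa using (tendsto_const_nhds (x := (1:ℝ)) (f := atTop)).sub this
    have h2 : Tendsto (fun P : ℝ => max 0 (1 - A * G / (P * H))) atTop (nhds 1) := by
      have := h1.max (tendsto_const_nhds (x := (0:ℝ)))
      simpa [max_comm, max_eq_left (by norm_num : (0:ℝ) ≤ 1)] using this
    exact h2.congr fun P => (hξ σ2 P).symm
end

section
/- Let X and Y be independent exponential random variables with means λ_a and λ_b, and c > 0. Then E[(X/Y)·𝟙{X ≤ cY}] = (λ_a/λ_b)·( ln(1 + c·λ_b/λ_a) − c·λ_b/(λ_a + c·λ_b) ). -/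
/-!
Write `a = 1/λa`, `b = 1/λb` for the rates. By independence the expectation is an integral against
the product of the two exponential laws; integrating out `X` first gives, for `Y = y > 0`, the
truncated mean `∫₀^{cy} x a e^{-ax} dx = 1/a - (cy + 1/a) e^{-acy}` divided by `y`. What remains
is a Frullani integral `∫₀^∞ (e^{-by} - e^{-(b+ac)y}) / y dy = log (1 + ac/b)` plus an elementary
exponential integral.
-/

open MeasureTheory ProbabilityTheory Set Real Filter Topology

namespace ProbabilityTheory

lemma integral_expMeasure_eq_integral_Ioi {r : ℝ} (hr : 0 < r) (g : ℝ → ℝ) :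
    ∫ x, g x ∂expMeasure r = ∫ x in Ioi 0, r * exp (-(r * x)) * g x := by
  have hpdf : ∀ x, (exponentialPDF r x).toReal • g x
      = (Ici 0).indicator (fun x ↦ r * exp (-(r * x)) * g x) x := by
    intro x
    rcases le_or_gt 0 x with hx | hx
    · rw [exponentialPDF_of_nonneg hx, ENNReal.toReal_ofReal (by positivity),
        indicator_of_mem (mem_Ici.2 hx), smul_eq_mul]
    · rw [exponentialPDF_of_neg hx, indicator_of_notMem (notMem_Ici.2 hx)]
      simp
  have hmeas : Measurable (exponentialPDF r) := (measurable_exponentialPDFReal r).ennreal_ofReal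
  change ∫ x, g x ∂volume.withDensity (exponentialPDF r) = _
  rw [integral_withDensity_eq_integral_toReal_smul hmeas
    (ae_of_all _ fun _ ↦ ENNReal.ofReal_lt_top)]
  simp_rw [hpdf]
  rw [integral_indicator measurableSet_Ici, integral_Ici_eq_integral_Ioi]

lemma expMeasure_Iio_zero (r : ℝ) : expMeasure r (Iio 0) = 0 := by
  change volume.withDensity (exponentialPDF r) (Iio 0) = 0
  rw [withDensity_apply _ measurableSet_Iio]
  exact lintegral_exponentialPDF_of_nonpos le_rfl

lemma ae_nonneg_expMeasure (r : ℝ) : ∀ᵐ x ∂expMeasure r, 0 ≤ x :=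
  ae_iff.2 <| measure_mono_null (fun _ hx ↦ not_le.1 hx) (expMeasure_Iio_zero r)

lemma setIntegral_Iic_id_expMeasure {a t : ℝ} (ha : 0 < a) (ht : 0 ≤ t) :
    ∫ x in Iic t, x ∂expMeasure a = 1 / a - (t + 1 / a) * exp (-(a * t)) := by
  have hderiv (x : ℝ) : HasDerivAt (fun x ↦ -((x + 1 / a) * exp (-(a * x))))
      (a * exp (-(a * x)) * x) x :=
    (((hasDerivAt_id' x).add_const (1 / a)).fun_mul
      ((hasDerivAt_id' x).const_mul a).fun_neg.exp).fun_neg.congr_deriv (by field_simp; ring)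
  have hint : IntervalIntegrable (fun x ↦ a * exp (-(a * x)) * x) volume 0 t := by
    apply Continuous.intervalIntegrable; fun_prop
  rw [← integral_indicator measurableSet_Iic, integral_expMeasure_eq_integral_Ioi ha]
  simp_rw [← indicator_mul_right _ (fun x ↦ a * exp (-(a * x)))]
  rw [setIntegral_indicator measurableSet_Iic, Ioi_inter_Iic, ← intervalIntegral.integral_of_le ht,
    intervalIntegral.integral_eq_sub_of_hasDerivAt (fun x _ ↦ hderiv x) hint]
  simp
  ring

end ProbabilityTheory

lemma exp_neg_mul_sub_exp_neg_mul_le (b d y : ℝ) :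
    exp (-(b * y)) - exp (-(d * y)) ≤ (d - b) * y * exp (-(b * y)) := by
  have hsplit : exp (-(d * y)) = exp (-(b * y)) * exp (-((d - b) * y)) := by
    rw [← exp_add]; ring_nf
  nlinarith [add_one_le_exp (-((d - b) * y)), exp_pos (-(b * y))]

lemma integrableOn_Ioi_inv_mul_exp_neg_sub {b d : ℝ} (hb : 0 < b) (hd : 0 < d) :
    IntegrableOn (fun y ↦ y⁻¹ * (exp (-(b * y)) - exp (-(d * y)))) (Ioi 0) := by
  wlog hbd : b ≤ d generalizing b d
  · exact (this hd hb (le_of_not_ge hbd)).neg.congr_fun (fun y _ ↦ by simp; ring) measurableSet_Ioi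
  refine Integrable.mono' ((exp_neg_integrableOn_Ioi 0 hb).const_mul (d - b)) (by fun_prop) ?_
  filter_upwards [ae_restrict_mem measurableSet_Ioi] with y (hy : 0 < y)
  have hdiff : 0 ≤ exp (-(b * y)) - exp (-(d * y)) :=
    sub_nonneg.2 (exp_le_exp.2 (by nlinarith))
  rw [norm_of_nonneg (by positivity), inv_mul_le_iff₀ hy, neg_mul]
  linarith [exp_neg_mul_sub_exp_neg_mul_le b d y]

lemma integral_Ioi_inv_mul_exp_neg_sub {b d : ℝ} (hb : 0 < b) (hd : 0 < d) :
    ∫ y in Ioi 0, y⁻¹ * (exp (-(b * y)) - exp (-(d * y))) = log (d / b) := by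
  have hcont : Continuous fun x ↦ exp (-x) := by fun_prop
  simpa using Frullani.integral_Ioi_eq (hcont.locallyIntegrable.locallyIntegrableOn _) hb hd
    ((hcont.tendsto' 0 1 (by simp)).mono_left nhdsWithin_le_nhds) tendsto_exp_neg_atTop_nhds_zero
    (integrableOn_Ioi_inv_mul_exp_neg_sub hb hd)

lemma integrableOn_Ioi_exp_neg_mul {d : ℝ} (hd : 0 < d) :
    IntegrableOn (fun y ↦ exp (-(d * y))) (Ioi 0) := by
  simpa only [neg_mul] using exp_neg_integrableOn_Ioi 0 hd

lemma integral_Ioi_exp_neg_mul {d : ℝ} (hd : 0 < d) : ∫ y in Ioi 0, exp (-(d * y)) = 1 / d := by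
  simpa [neg_mul, neg_div] using integral_exp_mul_Ioi (neg_neg_of_pos hd) 0

noncomputable def truncatedRatio (c : ℝ) : ℝ × ℝ → ℝ :=
  {p | p.1 ≤ c * p.2}.indicator fun p ↦ p.1 / p.2

lemma measurable_truncatedRatio (c : ℝ) : Measurable (truncatedRatio c) :=
  (measurable_fst.div measurable_snd).indicator
    (measurableSet_le measurable_fst (measurable_snd.const_mul c))

lemma norm_truncatedRatio_le {c : ℝ} (hc : 0 ≤ c) {p : ℝ × ℝ} (hp : 0 ≤ p.1) :
    ‖truncatedRatio c p‖ ≤ c := by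
  by_cases hle : p.1 ≤ c * p.2
  · rw [truncatedRatio, indicator_of_mem (s := {p : ℝ × ℝ | p.1 ≤ c * p.2}) hle, norm_div,
      Real.norm_of_nonneg hp]
    exact div_le_of_le_mul₀ (norm_nonneg _) hc
      (hle.trans (mul_le_mul_of_nonneg_left (le_norm_self _) hc))
  · rw [truncatedRatio, indicator_of_notMem (s := {p : ℝ × ℝ | p.1 ≤ c * p.2}) hle, norm_zero]
    exact hc

lemma integral_truncatedRatio_left (μ : Measure ℝ) (c y : ℝ) :
    ∫ x, truncatedRatio c (x, y) ∂μ = (∫ x in Iic (c * y), x ∂μ) / y := by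
  rw [← integral_div, ← integral_indicator measurableSet_Iic]
  rfl

lemma integral_truncatedRatio_expMeasure_prod {a b c : ℝ} (ha : 0 < a) (hb : 0 < b)
    (hc : 0 < c) :
    ∫ p, truncatedRatio c p ∂(expMeasure a).prod (expMeasure b) =
      b / a * (log (1 + a * c / b) - a * c / (b + a * c)) := by
  have := isProbabilityMeasure_expMeasure ha
  have := isProbabilityMeasure_expMeasure hb
  have hint : Integrable (truncatedRatio c) ((expMeasure a).prod (expMeasure b)) :=
    (integrable_const c).mono' (measurable_truncatedRatio c).aestronglyMeasurable
      ((Measure.quasiMeasurePreserving_fst.ae (ae_nonneg_expMeasure a)).mono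
        fun _ hp ↦ norm_truncatedRatio_le hc.le hp)
  set d := b + a * c with hd_def
  have hd : 0 < d := by positivity
  have hinner : ∀ y ∈ Ioi (0 : ℝ),
      b * exp (-(b * y)) * ∫ x, truncatedRatio c (x, y) ∂expMeasure a
        = b / a * (y⁻¹ * (exp (-(b * y)) - exp (-(d * y)))) - b * c * exp (-(d * y)) := by
    intro y (hy : 0 < y)
    have hexp : exp (-(a * (c * y))) * exp (-(b * y)) = exp (-(d * y)) := by
      rw [← exp_add, hd_def]; ring_nf
    rw [integral_truncatedRatio_left, setIntegral_Iic_id_expMeasure ha (by positivity), ← hexp]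
    field_simp
    ring
  rw [integral_prod_symm _ hint, integral_expMeasure_eq_integral_Ioi hb,
    setIntegral_congr_fun measurableSet_Ioi hinner,
    integral_sub ((integrableOn_Ioi_inv_mul_exp_neg_sub hb hd).const_mul _)
      ((integrableOn_Ioi_exp_neg_mul hd).const_mul _), integral_const_mul, integral_const_mul,
    integral_Ioi_inv_mul_exp_neg_sub hb hd, integral_Ioi_exp_neg_mul hd,
    show d / b = 1 + a * c / b by rw [hd_def]; field_simp]
  field_simp

/-- for independent exponentials X, Y with means λa, λb and c > 0,
E[(X/Y)·𝟙{X ≤ cY}] = (λa/λb)·(ln(1 + c·λb/λa) − c·λb/(λa + c·λb)). -/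
theorem stmt_6 {Ω : Type*} [MeasureSpace Ω] (μ : Measure Ω) [IsProbabilityMeasure μ]
    (lama lamb c : ℝ) (hlama : 0 < lama) (hlamb : 0 < lamb) (hc : 0 < c)
    (X Y : Ω → ℝ) (hX : Measurable X) (hY : Measurable Y)
    (hXexp : Measure.map X μ = expMeasure (1 / lama))
    (hYexp : Measure.map Y μ = expMeasure (1 / lamb))
    (hindep : IndepFun X Y μ) :
    ∫ ω in {ω | X ω ≤ c * Y ω}, X ω / Y ω ∂μ =
      (lama / lamb) * (Real.log (1 + c * lamb / lama) - c * lamb / (lama + c * lamb)) := by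
  have hlaw : μ.map (fun ω ↦ (X ω, Y ω)) = (expMeasure (1 / lama)).prod (expMeasure (1 / lamb)) := by
    rw [← hXexp, ← hYexp]
    exact hindep.map_prod_eq_prod_map_map hX.aemeasurable hY.aemeasurable
  calc ∫ ω in {ω | X ω ≤ c * Y ω}, X ω / Y ω ∂μ
      = ∫ ω, truncatedRatio c (X ω, Y ω) ∂μ :=
        (integral_indicator (measurableSet_le hX (hY.const_mul c))).symm
    _ = ∫ p, truncatedRatio c p ∂(expMeasure (1 / lama)).prod (expMeasure (1 / lamb)) := by
        rw [← hlaw, integral_map (hX.prodMk hY).aemeasurable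
          (measurable_truncatedRatio c).aestronglyMeasurable]
    _ = _ := by
        rw [integral_truncatedRatio_expMeasure_prod (by positivity) (by positivity) hc]
        field_simp
end
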